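/- Two orthogonal positively represented pure states cannot both have strictly positive Wigner function at the same phase space point: let v₀, v₁ : ZMod d → ℂ be vectors with Σ_x conj(v₀ x) * (v₁ x) = 0, and let P₀ = v₀ v₀ᴴ and P₁ = v₁ v₁ᴴ be the corresponding rank-one matrices (P_i x y = v_i x * conj(v_i y)). If for all w ∈ ZMod d × ZMod d the real parts of trace(A_w * P₀) and trace(A_w * P₁) are nonnegative, and for some u the real part of trace(A_u * P₀) is strictly positive, then trace(A_u * P₁) = 0. -/

import Mathlib

open Matrix Complex

/-- ω = exp(2πi/d). -/
noncomputable def omegaC (d : ℕ) : ℂ := Complex.exp (2 * Real.pi * Complex.I / d)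

/-- The clock matrix `Z`, with `Z x x = ω ^ x.val`. -/
noncomputable def Zmat (d : ℕ) : Matrix (ZMod d) (ZMod d) ℂ :=
  Matrix.diagonal (fun x => omegaC d ^ x.val)

/-- The shift matrix `X`, with `X x y = 1` iff `x = y + 1`. -/
noncomputable def Xmat (d : ℕ) : Matrix (ZMod d) (ZMod d) ℂ :=
  Matrix.of fun x y => if x = y + 1 then 1 else 0

/-- The Heisenberg–Weyl operator `T_a`. -/
noncomputable def TW (d : ℕ) [NeZero d] (a : ZMod d × ZMod d) : Matrix (ZMod d) (ZMod d) ℂ :=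
  omegaC d ^ ((-((2 : ZMod d)⁻¹ * a.1 * a.2)).val) • (Zmat d ^ a.1.val * Xmat d ^ a.2.val)

/-- The phase point operator at the origin, `A_0 = (1/d) • ∑ a, T_a`. -/
noncomputable def Apoint0 (d : ℕ) [NeZero d] : Matrix (ZMod d) (ZMod d) ℂ :=
  (1 / (d : ℂ)) • ∑ a : ZMod d × ZMod d, TW d a

/-- The phase point operator `A_u = T_u * A_0 * T_uᴴ`. -/
noncomputable def Apoint (d : ℕ) [NeZero d] (u : ZMod d × ZMod d) : Matrix (ZMod d) (ZMod d) ℂ :=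
  TW d u * Apoint0 d * (TW d u)ᴴ

/-! For odd `d` the phase point operator `A_u` is supported on the antidiagonal `x + y = 2 u₂`,
where its entries are the character values `ψ (u₁ (x - y))`, `ψ` the standard additive character
of `ZMod d`. So every `A_u` is Hermitian and the Wigner values `tr (A_u P)` of a pure state are
real, and orthogonality of characters gives the Moyal identity
`∑ u, tr (A_u P) tr (A_u Q) = d tr (P Q)`. For orthogonal pure states the right-hand side
vanishes; the left-hand side is then a vanishing sum of the nonnegative products
`tr (A_u P₀) tr (A_u P₁)`, so each of them is zero. -/

open ZMod (stdAddChar)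

lemma Matrix.IsHermitian.im_trace_mul_vecMulVec_star {𝕜 n : Type*} [RCLike 𝕜] [Fintype n]
    {A : Matrix n n 𝕜} (hA : A.IsHermitian) (v : n → 𝕜) :
    RCLike.im (A * vecMulVec v (star v)).trace = 0 := by
  rw [Matrix.mul_vecMulVec, Matrix.trace_vecMulVec, dotProduct_comm]
  exact hA.im_star_dotProduct_mulVec_self v

lemma Matrix.trace_vecMulVec_mul_vecMulVec {n R : Type*} [Fintype n] [CommSemiring R]
    (a b c e : n → R) : (vecMulVec a b * vecMulVec c e).trace = (b ⬝ᵥ c) * (a ⬝ᵥ e) := by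
  rw [Matrix.vecMulVec_mul_vecMulVec, Matrix.trace_vecMulVec, dotProduct_smul, smul_eq_mul]

lemma Matrix.trace_mul_eq_sum_prod {n R : Type*} [Fintype n] [NonUnitalNonAssocSemiring R]
    (M N : Matrix n n R) : (M * N).trace = ∑ p : n × n, M p.1 p.2 * N p.2 p.1 := by
  simp only [Matrix.trace, Matrix.diag, Matrix.mul_apply, Fintype.sum_prod_type]

lemma ZMod.inv_two_mul_two_of_odd {d : ℕ} (hodd : Odd d) : (2 : ZMod d)⁻¹ * 2 = 1 := by
  refine ZMod.inv_mul_of_unit _ ?_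
  simpa using (ZMod.isUnit_iff_coprime 2 d).mpr (Nat.coprime_two_left.mpr hodd)

lemma ZMod.eq_two_mul_iff_of_odd {d : ℕ} (hodd : Odd d) {a t : ZMod d} :
    a = 2 * t ↔ t = 2⁻¹ * a := by
  have h2 := ZMod.inv_two_mul_two_of_odd hodd
  constructor <;> rintro rfl
  · rw [← mul_assoc, h2, one_mul]
  · rw [← mul_assoc, mul_comm 2, h2, one_mul]

section

variable {d : ℕ} [NeZero d]

lemma omegaC_pow (n : ℕ) : omegaC d ^ n = stdAddChar (n : ZMod d) := by
  rw [ZMod.stdAddChar_apply, ZMod.toCircle_natCast, omegaC, ← Complex.exp_nat_mul]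
  ring_nf

lemma omegaC_pow_val (a : ZMod d) : omegaC d ^ a.val = stdAddChar a := by
  rw [omegaC_pow, ZMod.natCast_val, ZMod.cast_id', id]

lemma omegaC_pow_val_mul_val (a b : ZMod d) : omegaC d ^ (a.val * b.val) = stdAddChar (a * b) := by
  simp only [omegaC_pow, Nat.cast_mul, ZMod.natCast_val, ZMod.cast_id', id]

lemma conj_stdAddChar (a : ZMod d) : starRingEnd ℂ (stdAddChar a) = stdAddChar (-a) := by
  rw [ZMod.stdAddChar_apply, ZMod.stdAddChar_apply, AddChar.map_neg_eq_inv, Circle.coe_inv_eq_conj]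

lemma sum_stdAddChar_mul (b : ZMod d) :
    ∑ x : ZMod d, stdAddChar (x * b) = if b = 0 then (d : ℂ) else 0 := by
  rw [AddChar.sum_mulShift b (ZMod.isPrimitive_stdAddChar d), ZMod.card]
  split_ifs <;> simp

lemma Xmat_pow_apply (n : ℕ) (x y : ZMod d) :
    (Xmat d ^ n) x y = if y + n = x then 1 else 0 := by
  induction n generalizing y with
  | zero => simp [Matrix.one_apply, eq_comm]
  | succ n ih =>
    rw [pow_succ, Matrix.mul_apply, Finset.sum_eq_single (y + 1)]
    · rw [ih]
      simp [Xmat, add_assoc, add_comm (1 : ZMod d)]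
    · intro z _ hz
      simp [Xmat, hz]
    · simp

lemma TW_apply (a : ZMod d × ZMod d) (x y : ZMod d) :
    TW d a x y = if y + a.2 = x then stdAddChar (a.1 * x - 2⁻¹ * a.1 * a.2) else 0 := by
  rw [TW, Zmat, Matrix.diagonal_pow, Matrix.smul_apply, Matrix.diagonal_mul, Xmat_pow_apply,
    ZMod.natCast_val, ZMod.cast_id', id]
  split_ifs
  · rw [Pi.pow_apply, ← pow_mul, omegaC_pow_val_mul_val, omegaC_pow_val, smul_eq_mul, mul_one,
      ← AddChar.map_add_eq_mul]
    ring_nf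
  · simp

lemma Apoint0_apply (hodd : Odd d) (x y : ZMod d) :
    Apoint0 d x y = if x + y = 0 then 1 else 0 := by
  have h2 := ZMod.inv_two_mul_two_of_odd hodd
  have hsum : ∀ a₁ : ZMod d, ∑ a₂ : ZMod d, TW d (a₁, a₂) x y
      = stdAddChar (a₁ * (2⁻¹ * (x + y))) := by
    intro a₁
    simp only [TW_apply, (eq_sub_iff_add_eq').symm, Finset.sum_ite_eq', Finset.mem_univ, if_true]
    congr 1
    linear_combination (-(a₁ * x)) * h2
  rw [Apoint0, Matrix.smul_apply, Matrix.sum_apply, Fintype.sum_prod_type]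
  simp only [hsum, sum_stdAddChar_mul, (IsUnit.of_mul_eq_one _ h2).mul_right_eq_zero]
  split_ifs <;> simp

lemma Apoint_apply (hodd : Odd d) (u : ZMod d × ZMod d) (x y : ZMod d) :
    Apoint d u x y = if x + y = 2 * u.2 then stdAddChar (u.1 * (x - y)) else 0 := by
  have hTA : ∀ w, (TW d u * Apoint0 d) x w
      = if w = u.2 - x then stdAddChar (u.1 * x - 2⁻¹ * u.1 * u.2) else 0 := by
    intro w
    rw [Matrix.mul_apply, Finset.sum_eq_single (x - u.2)]
    · have hw : x - u.2 + w = 0 ↔ w = u.2 - x := by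
        constructor <;> intro h <;> linear_combination h
      simp only [TW_apply, Apoint0_apply hodd, sub_add_cancel, if_true, hw, mul_ite, mul_one,
        mul_zero]
    · intro z _ hz
      rw [TW_apply, if_neg fun h => hz (eq_sub_of_add_eq h), zero_mul]
    · simp
  rw [Apoint, Matrix.mul_apply, Finset.sum_eq_single (u.2 - x)]
  · rw [hTA, Matrix.conjTranspose_apply, TW_apply, if_pos rfl]
    have hy : u.2 - x + u.2 = y ↔ x + y = 2 * u.2 := by
      constructor <;> intro h <;> linear_combination -h
    simp only [apply_ite star, star_zero, mul_ite, mul_zero, hy]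
    refine if_congr Iff.rfl ?_ rfl
    rw [star_def, conj_stdAddChar, ← AddChar.map_add_eq_mul]
    ring_nf
  · intro w _ hw
    rw [hTA, if_neg hw, zero_mul]
  · simp

lemma sum_fst_Apoint_apply_mul_Apoint_apply (hodd : Odd d) (t x y x' y' : ZMod d) :
    ∑ s : ZMod d, Apoint d (s, t) x y * Apoint d (s, t) x' y'
      = if x + y = 2 * t ∧ x' + y' = 2 * t ∧ x - y + (x' - y') = 0 then (d : ℂ) else 0 := by
  simp only [Apoint_apply hodd, ite_mul, mul_ite, zero_mul, mul_zero, ← AddChar.map_add_eq_mul,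
    ← mul_add]
  split_ifs <;> simp_all [sum_stdAddChar_mul]

lemma sum_Apoint_apply_mul_Apoint_apply (hodd : Odd d) (x y x' y' : ZMod d) :
    ∑ u, Apoint d u x y * Apoint d u x' y' = if x = y' ∧ y = x' then (d : ℂ) else 0 := by
  have h2 := ZMod.inv_two_mul_two_of_odd hodd
  rw [Fintype.sum_prod_type_right]
  simp only [sum_fst_Apoint_apply_mul_Apoint_apply hodd, ZMod.eq_two_mul_iff_of_odd hodd,
    ite_and]
  rw [Finset.sum_ite_eq', if_pos (Finset.mem_univ _)]
  simp only [← ite_and]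
  refine if_congr ⟨fun ⟨hA, hB⟩ => ⟨?_, ?_⟩, ?_⟩ rfl rfl
  · linear_combination -(x - y') * h2 + hA + 2⁻¹ * hB
  · linear_combination -(y - x') * h2 + hA - 2⁻¹ * hB
  · rintro ⟨rfl, rfl⟩
    constructor <;> ring

lemma Apoint_isHermitian (hodd : Odd d) (u : ZMod d × ZMod d) : (Apoint d u).IsHermitian := by
  refine Matrix.IsHermitian.ext fun x y => ?_
  rw [Apoint_apply hodd, Apoint_apply hodd, apply_ite star, star_zero, add_comm y x, star_def,
    conj_stdAddChar, ← mul_neg, neg_sub]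

lemma sum_trace_Apoint_mul_mul_trace_Apoint_mul (hodd : Odd d)
    (P Q : Matrix (ZMod d) (ZMod d) ℂ) :
    ∑ u, (Apoint d u * P).trace * (Apoint d u * Q).trace = d * (P * Q).trace := by
  have hswap : ∀ p q : ZMod d × ZMod d, (p.1 = q.2 ∧ p.2 = q.1) ↔ q = p.swap := fun p q => by
    rw [Prod.ext_iff, Prod.fst_swap, Prod.snd_swap, and_comm, eq_comm, @eq_comm _ q.2]
  calc ∑ u, (Apoint d u * P).trace * (Apoint d u * Q).trace
      = ∑ u, ∑ p : ZMod d × ZMod d, ∑ q : ZMod d × ZMod d,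
          Apoint d u p.1 p.2 * Apoint d u q.1 q.2 * (P p.2 p.1 * Q q.2 q.1) := by
        refine Finset.sum_congr rfl fun u _ => ?_
        rw [Matrix.trace_mul_eq_sum_prod, Matrix.trace_mul_eq_sum_prod, Finset.sum_mul_sum]
        exact Finset.sum_congr rfl fun p _ => Finset.sum_congr rfl fun q _ => by ring
    _ = ∑ p : ZMod d × ZMod d, ∑ q : ZMod d × ZMod d,
          (∑ u, Apoint d u p.1 p.2 * Apoint d u q.1 q.2) * (P p.2 p.1 * Q q.2 q.1) := by
        simp only [Finset.sum_mul]
        rw [Finset.sum_comm]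
        exact Finset.sum_congr rfl fun p _ => Finset.sum_comm
    _ = ∑ p : ZMod d × ZMod d, d * (Q p.1 p.2 * P p.2 p.1) := by
        simp only [sum_Apoint_apply_mul_Apoint_apply hodd, hswap, ite_mul, zero_mul,
          Finset.sum_ite_eq', Finset.mem_univ, if_true, Prod.fst_swap, Prod.snd_swap]
        exact Finset.sum_congr rfl fun p _ => by ring
    _ = d * (P * Q).trace := by
        rw [← Finset.mul_sum, ← Matrix.trace_mul_eq_sum_prod, Matrix.trace_mul_comm]

end

theorem orthogonal_positive_states_general (d : ℕ) [NeZero d] (hodd : Odd d)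
    (v₀ v₁ : ZMod d → ℂ)
    (horth : ∑ x : ZMod d, (starRingEnd ℂ) (v₀ x) * v₁ x = 0)
    (P₀ P₁ : Matrix (ZMod d) (ZMod d) ℂ)
    (hP₀ : P₀ = Matrix.of fun x y => v₀ x * (starRingEnd ℂ) (v₀ y))
    (hP₁ : P₁ = Matrix.of fun x y => v₁ x * (starRingEnd ℂ) (v₁ y))
    (hpos₀ : ∀ w : ZMod d × ZMod d, 0 ≤ ((Apoint d w * P₀).trace).re)
    (hpos₁ : ∀ w : ZMod d × ZMod d, 0 ≤ ((Apoint d w * P₁).trace).re)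
    (u : ZMod d × ZMod d) (hu : 0 < ((Apoint d u * P₀).trace).re) :
    (Apoint d u * P₁).trace = 0 := by
  replace hP₀ : P₀ = Matrix.vecMulVec v₀ (star v₀) := hP₀
  replace hP₁ : P₁ = Matrix.vecMulVec v₁ (star v₁) := hP₁
  have hreal : ∀ w, ((Apoint d w * P₀).trace).im = 0 ∧ ((Apoint d w * P₁).trace).im = 0 :=
    fun w => ⟨hP₀ ▸ (Apoint_isHermitian hodd w).im_trace_mul_vecMulVec_star v₀,
      hP₁ ▸ (Apoint_isHermitian hodd w).im_trace_mul_vecMulVec_star v₁⟩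
  have htrace : (P₀ * P₁).trace = 0 := by
    rw [hP₀, hP₁, Matrix.trace_vecMulVec_mul_vecMulVec]
    exact mul_eq_zero_of_left horth _
  have hsum : ∑ w, ((Apoint d w * P₀).trace).re * ((Apoint d w * P₁).trace).re = 0 := by
    have := congrArg Complex.re (sum_trace_Apoint_mul_mul_trace_Apoint_mul hodd P₀ P₁)
    rw [htrace, mul_zero, Complex.zero_re, Complex.re_sum] at this
    simpa only [Complex.mul_re, (hreal _).1, (hreal _).2, mul_zero, sub_zero] using this
  have hprod := (Finset.sum_eq_zero_iff_of_nonneg fun w _ => mul_nonneg (hpos₀ w) (hpos₁ w)).mp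
    hsum u (Finset.mem_univ u)
  exact Complex.ext ((mul_eq_zero.mp hprod).resolve_left hu.ne') (hreal u).2

/-- Two orthogonal positively represented pure states cannot both have strictly positive
Wigner function at the same phase space point. -/
theorem orthogonal_positive_states (d : ℕ) [NeZero d] (hodd : Odd d) (hd : 1 < d)
    (v₀ v₁ : ZMod d → ℂ)
    (horth : ∑ x : ZMod d, (starRingEnd ℂ) (v₀ x) * v₁ x = 0)
    (P₀ P₁ : Matrix (ZMod d) (ZMod d) ℂ)
    (hP₀ : P₀ = Matrix.of fun x y => v₀ x * (starRingEnd ℂ) (v₀ y))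
    (hP₁ : P₁ = Matrix.of fun x y => v₁ x * (starRingEnd ℂ) (v₁ y))
    (hpos₀ : ∀ w : ZMod d × ZMod d, 0 ≤ ((Apoint d w * P₀).trace).re)
    (hpos₁ : ∀ w : ZMod d × ZMod d, 0 ≤ ((Apoint d w * P₁).trace).re)
    (u : ZMod d × ZMod d) (hu : 0 < ((Apoint d u * P₀).trace).re) :
    (Apoint d u * P₁).trace = 0 :=
  orthogonal_positive_states_general d hodd v₀ v₁ horth P₀ P₁ hP₀ hP₁ hpos₀ hpos₁ u hu
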